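/- Let n ≥ 1 and let α = (α_1, …, α_n) ∈ ℝ^n be non-singular, i.e. limsup_{t→∞} t^{1/n} · ψ_α(t) > 0, where ψ_α(t) = min_{q∈ℤ, 1≤q≤t} max_{1≤j≤n} ‖qα_j‖. Then there exist δ > 0 and infinitely many positive integers q such that for every η = (η_1, …, η_n) ∈ ℝ^n there exists a positive integer k ≤ q with max_{1≤j≤n} ‖kα_j − η_j‖ ≤ δ/q^{1/n}. In particular, the Kronecker sequence ξ_k = ({kα_1}, …, {kα_n}) is well distributed with constant C = 2δ. -/

import Mathlib

open MeasureTheory Filter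

/-- Distance from `x` to the nearest integer: `‖x‖ = min_{a ∈ ℤ} |x - a|`. -/
noncomputable def nint (x : ℝ) : ℝ := ⨅ a : ℤ, |x - (a : ℝ)|

/-- The irrationality measure function
`ψ_α(t) = min_{q ∈ ℤ, 1 ≤ q ≤ t} max_{1 ≤ j ≤ n} ‖q α_j‖`. -/
noncomputable def psiFun (n : ℕ) (α : Fin n → ℝ) (t : ℝ) : ℝ :=
  sInf {v : ℝ | ∃ q : ℕ, 1 ≤ q ∧ (q : ℝ) ≤ t ∧ v = ⨆ j, nint ((q : ℝ) * α j)}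

/-! Non-singularity gives arbitrarily large `t` with `ψ_α(t) > γ t^(-1/n)`: the points `qα`,
`1 ≤ q ≤ t`, stay `γ t^(-1/n)`-far from `ℤⁿ`. To reach a target `η`, put `L = J!` and
`β = (η - (LQ+1)α) / L`, and sort the `(Q+1)(J+1)` points `mα + jβ` into `N^n` cubes of side `1/N`:
two of them give `‖mα + dβ‖ < 1/N` with `|m| ≤ Q`, `|d| ≤ J`, not both zero. Separation rules out
`d = 0`, and multiplying by `e = L/d` gives `‖kα - η‖ < L/N` for `k = LQ + 1 - em ∈ [1, 2LQ+1]`. -/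

open scoped Nat

lemma nint_eq_abs_sub_round (x : ℝ) : nint x = |x - round x| :=
  le_antisymm (ciInf_le ⟨0, by rintro _ ⟨a, rfl⟩; exact abs_nonneg _⟩ (round x))
    (le_ciInf (round_le x))

lemma nint_nonneg (x : ℝ) : 0 ≤ nint x := by
  rw [nint_eq_abs_sub_round]
  exact abs_nonneg _

lemma nint_le_abs_sub (x : ℝ) (a : ℤ) : nint x ≤ |x - a| := by
  rw [nint_eq_abs_sub_round]
  exact round_le x a

lemma nint_neg_le (x : ℝ) : nint (-x) ≤ nint x := by
  calc nint (-x) ≤ |-x - ((-round x : ℤ) : ℝ)| := nint_le_abs_sub _ _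
    _ = nint x := by rw [nint_eq_abs_sub_round, ← abs_neg]; push_cast; ring_nf

lemma nint_neg (x : ℝ) : nint (-x) = nint x :=
  le_antisymm (nint_neg_le x) (by simpa using nint_neg_le (-x))

lemma nint_abs_mul (y x : ℝ) : nint (|y| * x) = nint (y * x) := by
  rcases abs_choice y with hy | hy <;> rw [hy]
  rw [neg_mul, nint_neg]

lemma nint_intCast_mul_le (m : ℤ) (x : ℝ) : nint (m * x) ≤ |(m : ℝ)| * nint x := by
  calc nint (m * x) ≤ |m * x - ((m * round x : ℤ) : ℝ)| := nint_le_abs_sub _ _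
    _ = |(m : ℝ)| * nint x := by rw [nint_eq_abs_sub_round, ← abs_mul]; push_cast; ring_nf

lemma nint_sub_lt_of_floor_fract_mul_eq {N : ℕ} (hN : 0 < N) {x y : ℝ}
    (h : ⌊Int.fract x * N⌋₊ = ⌊Int.fract y * N⌋₊) : nint (x - y) < 1 / N := by
  have hN' : (0 : ℝ) < N := by exact_mod_cast hN
  have hfloor : ⌊Int.fract x * N⌋ = ⌊Int.fract y * N⌋ := by
    rw [← Int.natCast_floor_eq_floor (by positivity), ← Int.natCast_floor_eq_floor (by positivity),
      h]
  have hclose := Int.abs_sub_lt_one_of_floor_eq_floor hfloor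
  rw [← sub_mul, abs_mul, abs_of_pos hN', ← lt_div_iff₀ hN'] at hclose
  calc nint (x - y) ≤ |x - y - ((⌊x⌋ - ⌊y⌋ : ℤ) : ℝ)| := nint_le_abs_sub _ _
    _ = |Int.fract x - Int.fract y| := by rw [Int.fract, Int.fract]; push_cast; ring_nf
    _ < 1 / N := hclose

lemma fract_mem_Ico_of_nint_sub_lt {x a ρ : ℝ} (ha : 0 ≤ a) (haρ : a + 2 * ρ ≤ 1)
    (h : nint (x - (a + ρ)) < ρ) : Int.fract x ∈ Set.Ico a (a + 2 * ρ) := by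
  rw [nint_eq_abs_sub_round, abs_lt] at h
  set r := round (x - (a + ρ))
  have hfract : Int.fract x = x - r :=
    Int.fract_eq_iff.mpr ⟨by linarith, by linarith, r, by ring⟩
  rw [hfract]
  constructor <;> linarith

lemma iSup_nint_nonneg {ι : Sort*} (f : ι → ℝ) : 0 ≤ ⨆ i, nint (f i) :=
  Real.iSup_nonneg fun _ => nint_nonneg _

lemma psiFun_nonneg (n : ℕ) (α : Fin n → ℝ) (t : ℝ) : 0 ≤ psiFun n α t :=
  Real.sInf_nonneg <| by rintro _ ⟨q, -, -, rfl⟩; exact iSup_nint_nonneg _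

lemma psiFun_le_iSup_nint {n : ℕ} (α : Fin n → ℝ) {t : ℝ} {q : ℕ} (hq : 1 ≤ q)
    (hqt : (q : ℝ) ≤ t) : psiFun n α t ≤ ⨆ j, nint ((q : ℝ) * α j) :=
  csInf_le ⟨0, by rintro _ ⟨q, -, -, rfl⟩; exact iSup_nint_nonneg _⟩ ⟨q, hq, hqt, rfl⟩

lemma exists_le_nint_of_lt_psiFun {n : ℕ} [NeZero n] {α : Fin n → ℝ} {t r : ℝ}
    (hr : r < psiFun n α t) {q : ℕ} (hq : 1 ≤ q) (hqt : (q : ℝ) ≤ t) :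
    ∃ j, r ≤ nint ((q : ℝ) * α j) :=
  (exists_lt_of_lt_ciSup (hr.trans_le (psiFun_le_iSup_nint α hq hqt))).imp fun _ => le_of_lt

lemma exists_frequently_lt_rpow_mul_psiFun {n : ℕ} {α : Fin n → ℝ}
    (hns : 0 < atTop.limsup (fun t : ℝ => t ^ ((1 : ℝ) / n) * psiFun n α t)) :
    ∃ γ : ℝ, 0 < γ ∧ γ ≤ 1 ∧
      ∀ T : ℝ, ∃ t, T ≤ t ∧ 1 ≤ t ∧ γ < t ^ ((1 : ℝ) / n) * psiFun n α t := by
  set γ := min (atTop.limsup (fun t : ℝ => t ^ ((1 : ℝ) / n) * psiFun n α t) / 2) 1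
  have hfreq : ∃ᶠ t : ℝ in atTop, γ < t ^ ((1 : ℝ) / n) * psiFun n α t := by
    refine frequently_lt_of_lt_limsup ?_ ((min_le_left _ _).trans_lt (half_lt_self hns))
    refine IsCoboundedUnder.of_frequently_ge (a := 0) (Eventually.frequently ?_)
    filter_upwards [eventually_ge_atTop 0] with t ht
    exact mul_nonneg (Real.rpow_nonneg ht _) (psiFun_nonneg n α t)
  refine ⟨γ, lt_min (half_pos hns) one_pos, min_le_right _ _, fun T => ?_⟩
  obtain ⟨t, hTt, hγt, ht1⟩ := frequently_atTop.mp (hfreq.and_eventually (eventually_ge_atTop 1)) T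
  exact ⟨t, hTt, ht1, hγt⟩

lemma exists_ne_forall_nint_sub_lt {ι κ : Type*} [Fintype ι] [Fintype κ] {N : ℕ} (hN : 0 < N)
    (w : ι → κ → ℝ) (hcard : N ^ Fintype.card κ < Fintype.card ι) :
    ∃ a b, a ≠ b ∧ ∀ i, nint (w a i - w b i) < 1 / N := by
  classical
  have hN' : (0 : ℝ) < N := by exact_mod_cast hN
  let cell : ι → κ → Fin N := fun a i =>
    ⟨⌊Int.fract (w a i) * N⌋₊, (Nat.floor_lt (by positivity)).mpr
      (mul_lt_of_lt_one_left hN' (Int.fract_lt_one _))⟩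
  obtain ⟨a, b, hab, hcell⟩ := Fintype.exists_ne_map_eq_of_card_lt cell (by simpa using hcard)
  exact ⟨a, b, hab, fun i =>
    nint_sub_lt_of_floor_fract_mul_eq hN (congrArg Fin.val (congrFun hcell i))⟩

lemma exists_int_forall_nint_add_lt {n : ℕ} (α β : Fin n → ℝ) {N Q J : ℕ} (hN : 0 < N)
    (hcard : N ^ n < (Q + 1) * (J + 1)) :
    ∃ m d : ℤ, (m ≠ 0 ∨ d ≠ 0) ∧ |m| ≤ Q ∧ |d| ≤ J ∧
      ∀ i, nint (m * α i + d * β i) < 1 / N := by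
  obtain ⟨a, b, hab, hclose⟩ := exists_ne_forall_nint_sub_lt hN
    (fun (p : Fin (Q + 1) × Fin (J + 1)) i => (p.1 : ℝ) * α i + (p.2 : ℝ) * β i)
    (by simpa using hcard)
  have := a.1.isLt; have := b.1.isLt; have := a.2.isLt; have := b.2.isLt
  refine ⟨(a.1 : ℤ) - b.1, (a.2 : ℤ) - b.2, ?_, abs_le.mpr ⟨by omega, by omega⟩,
    abs_le.mpr ⟨by omega, by omega⟩, fun i => ?_⟩
  · by_contra! h
    exact hab (Prod.ext (Fin.ext (by omega)) (Fin.ext (by omega)))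
  · convert hclose i using 2
    push_cast
    ring

lemma exists_nat_forall_nint_sub_lt_of_nint_add_lt {n : ℕ} {α η : Fin n → ℝ} {L Q : ℕ}
    {m d : ℤ} {r : ℝ} (hL : 0 < L) (hd : d ≠ 0) (hdL : d ∣ L) (hm : |m| ≤ Q)
    (h : ∀ i, nint (m * α i + d * ((η i - (L * Q + 1 : ℕ) * α i) / L)) < r) :
    ∃ k : ℕ, 1 ≤ k ∧ k ≤ 2 * L * Q + 1 ∧ ∀ i, nint (k * α i - η i) < L * r := by
  obtain ⟨e, he⟩ := hdL
  have he0 : e ≠ 0 := by rintro rfl; omega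
  have heL : |e| ≤ L := by
    have : |(L : ℤ)| = |d| * |e| := by rw [he, abs_mul]
    rw [abs_of_nonneg (by positivity)] at this
    nlinarith [Int.one_le_abs hd, abs_nonneg e]
  have hem : |e * m| ≤ L * Q := by
    rw [abs_mul]
    exact mul_le_mul heL hm (abs_nonneg m) (by positivity)
  obtain ⟨k, hk⟩ := Int.eq_ofNat_of_zero_le (a := L * Q + 1 - e * m) (by
    have := (abs_le.mp hem).2; nlinarith)
  have hkR : (k : ℝ) = L * Q + 1 - e * m := by exact_mod_cast hk.symm
  have heR : (L : ℝ) = d * e := by exact_mod_cast he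
  refine ⟨k, ?_, ?_, fun i => ?_⟩
  · zify; linarith [(abs_le.mp hem).2]
  · zify; linarith [(abs_le.mp hem).1]
  have hdiff : (k : ℝ) * α i - η i =
      -(e * (m * α i + d * ((η i - (L * Q + 1 : ℕ) * α i) / L))) := by
    rw [hkR]
    field_simp
    push_cast
    rw [heR]
    ring
  set s := (m : ℝ) * α i + d * ((η i - (L * Q + 1 : ℕ) * α i) / L)
  have hr : 0 ≤ r := (nint_nonneg _).trans (h i).le
  have he1 : (1 : ℝ) ≤ |(e : ℝ)| := by exact_mod_cast Int.one_le_abs he0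
  calc nint ((k : ℝ) * α i - η i) ≤ |(e : ℝ)| * nint s := by
        rw [hdiff, nint_neg]; exact nint_intCast_mul_le _ _
    _ < |(e : ℝ)| * r := mul_lt_mul_of_pos_left (h i) (by linarith)
    _ ≤ L * r := mul_le_mul_of_nonneg_right (by exact_mod_cast heL) hr

lemma exists_nat_forall_nint_sub_lt_of_separated {n : ℕ} {α : Fin n → ℝ} {N Q J : ℕ}
    (hN : 0 < N) (hcard : N ^ n < (Q + 1) * (J + 1))
    (hsep : ∀ q : ℕ, 1 ≤ q → q ≤ Q → ∃ j, 1 / (N : ℝ) ≤ nint (q * α j)) (η : Fin n → ℝ) :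
    ∃ k : ℕ, 1 ≤ k ∧ k ≤ 2 * J ! * Q + 1 ∧ ∀ i, nint (k * α i - η i) < J ! / N := by
  obtain ⟨m, d, hmd, hm, hd, hclose⟩ :=
    exists_int_forall_nint_add_lt α (fun i => (η i - (J ! * Q + 1 : ℕ) * α i) / J !) hN hcard
  rcases eq_or_ne d 0 with rfl | hd0
  · have hm_abs := Int.natCast_natAbs m
    obtain ⟨j, hj⟩ := hsep m.natAbs (by omega) (by omega)
    rw [Nat.cast_natAbs, Int.cast_abs, nint_abs_mul] at hj
    have := hclose j
    simp only [Int.cast_zero, zero_mul, add_zero] at this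
    linarith
  · have hd_abs := Int.natCast_natAbs d
    have hdvd : d ∣ (J ! : ℤ) :=
      Int.natAbs_dvd.mp (Int.natCast_dvd_natCast.mpr (Nat.dvd_factorial (by omega) (by omega)))
    simpa only [mul_one_div] using
      exists_nat_forall_nint_sub_lt_of_nint_add_lt (Nat.factorial_pos J) hd0 hdvd hm hclose

lemma rpow_le_mul_rpow_of_le_mul {x c t p : ℝ} (hx : 0 ≤ x) (hc : 1 ≤ c) (ht : 0 ≤ t)
    (hp0 : 0 ≤ p) (hp1 : p ≤ 1) (h : x ≤ c * t) : x ^ p ≤ c * t ^ p :=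
  calc x ^ p ≤ (c * t) ^ p := Real.rpow_le_rpow hx h hp0
    _ = c ^ p * t ^ p := Real.mul_rpow (by linarith) ht
    _ ≤ c * t ^ p := by gcongr; exact Real.rpow_le_self_of_one_le hc hp1

lemma exists_nat_rpow_div_le_and_pow_lt {n : ℕ} (hn : n ≠ 0) {γ t : ℝ} (hγ : 0 < γ)
    (hγ1 : γ ≤ 1) (ht : 1 ≤ t) :
    ∃ N : ℕ, t ^ ((1 : ℝ) / n) / γ ≤ N ∧ N ^ n < (⌊t⌋₊ + 1) * (⌈(2 / γ) ^ n⌉₊ + 1) := by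
  set T := t ^ ((1 : ℝ) / n)
  have hT : 1 ≤ T := Real.one_le_rpow ht (by positivity)
  have hTn : T ^ n = t := by
    simp only [T, one_div]; exact Real.rpow_inv_natCast_pow (by linarith) hn
  have hTγ : 1 ≤ T / γ := (one_le_div hγ).mpr (hγ1.trans hT)
  refine ⟨⌈T / γ⌉₊, Nat.le_ceil _, ?_⟩
  have hN : (⌈T / γ⌉₊ : ℝ) ≤ (2 / γ) * T := by
    rw [div_mul_eq_mul_div, mul_div_assoc]; exact Nat.ceil_le_two_mul (by linarith)
  have : (⌈T / γ⌉₊ : ℝ) ^ n < (⌊t⌋₊ + 1) * (⌈(2 / γ) ^ n⌉₊ + 1) :=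
    calc (⌈T / γ⌉₊ : ℝ) ^ n ≤ ((2 / γ) * T) ^ n := by gcongr
      _ = t * (2 / γ) ^ n := by rw [mul_pow, hTn, mul_comm]
      _ < (⌊t⌋₊ + 1) * (⌈(2 / γ) ^ n⌉₊ + 1) := mul_lt_mul'' (Nat.lt_floor_add_one t)
          ((Nat.le_ceil _).trans_lt (lt_add_one _)) (by linarith) (by positivity)
  exact_mod_cast this

lemma exists_forall_nint_sub_lt_of_lt_rpow_mul_psiFun {n : ℕ} (hn : 1 ≤ n) {α : Fin n → ℝ}
    {γ t : ℝ} (hγ : 0 < γ) (hγ1 : γ ≤ 1) (ht : 1 ≤ t)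
    (hψ : γ < t ^ ((1 : ℝ) / n) * psiFun n α t) :
    ∃ q : ℕ, ⌊t⌋₊ ≤ q ∧ 1 ≤ q ∧ ∀ η : Fin n → ℝ, ∃ k : ℕ, 1 ≤ k ∧ k ≤ q ∧
      ∀ i, nint (k * α i - η i) < 3 * (⌈(2 / γ) ^ n⌉₊ ! : ℝ) ^ 2 / (q : ℝ) ^ ((1 : ℝ) / n) := by
  have : NeZero n := ⟨by omega⟩
  set T := t ^ ((1 : ℝ) / n)
  set J := ⌈(2 / γ) ^ n⌉₊
  set Q := ⌊t⌋₊
  have hT : 1 ≤ T := Real.one_le_rpow ht (by positivity)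
  obtain ⟨N, hNT, hcard⟩ := exists_nat_rpow_div_le_and_pow_lt (by omega : n ≠ 0) hγ hγ1 ht
  have hTN : T ≤ N := (le_div_self (by linarith) hγ hγ1).trans hNT
  have hsep : ∀ q : ℕ, 1 ≤ q → q ≤ Q → ∃ j, 1 / (N : ℝ) ≤ nint (q * α j) := by
    refine fun q hq hqQ =>
      exists_le_nint_of_lt_psiFun ?_ hq ((Nat.le_floor_iff (by linarith)).mp hqQ)
    calc 1 / (N : ℝ) ≤ γ / T := by
          rwa [one_div_le (by linarith) (by positivity), one_div_div]
      _ < psiFun n α t := by rw [div_lt_iff₀' (by positivity)]; exact hψ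
  refine ⟨2 * J ! * Q + 1, by nlinarith [Nat.factorial_pos J], by omega, fun η => ?_⟩
  have hN : 0 < N := by exact_mod_cast (zero_lt_one.trans_le hT).trans_le hTN
  obtain ⟨k, hk1, hkq, hk⟩ := exists_nat_forall_nint_sub_lt_of_separated hN hcard hsep η
  refine ⟨k, hk1, hkq, fun i => (hk i).trans_le ?_⟩
  have hL : (1 : ℝ) ≤ J ! := by exact_mod_cast Nat.factorial_pos J
  have hq : ((2 * J ! * Q + 1 : ℕ) : ℝ) ^ ((1 : ℝ) / n) ≤ 3 * J ! * T := by
    refine rpow_le_mul_rpow_of_le_mul (by positivity) (by linarith) (by linarith) (by positivity)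
      (by rw [div_le_one (by positivity)]; exact_mod_cast hn) ?_
    push_cast
    nlinarith [Nat.floor_le (by linarith : 0 ≤ t)]
  calc (J ! : ℝ) / N ≤ J ! / T := by gcongr
    _ = 3 * (J ! : ℝ) ^ 2 / (3 * J ! * T) := by field_simp
    _ ≤ 3 * (J ! : ℝ) ^ 2 / ((2 * J ! * Q + 1 : ℕ) : ℝ) ^ ((1 : ℝ) / n) := by gcongr

lemma Set.Ico_subset_Ico_of_univ_pi_Ico_subset {ι α : Type*} [LinearOrder α] {a a' b b' : ι → α}
    (hne : ∀ i, a i < a' i)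
    (h : Set.univ.pi (fun i => Set.Ico (a i) (a' i)) ⊆ Set.univ.pi fun i => Set.Ico (b i) (b' i))
    (i : ι) : Set.Ico (a i) (a' i) ⊆ Set.Ico (b i) (b' i) := by
  rcases Set.univ_pi_subset_univ_pi_iff.mp h with h | ⟨j, hj⟩
  · exact h i
  · exact absurd hj (Set.nonempty_Ico.mpr (hne j)).ne_empty

/-- **Khintchine's criterion (direct direction).** If `α ∈ ℝ^n` is non-singular,
i.e. `limsup_{t→∞} t^(1/n) ψ_α(t) > 0`, then there exist `δ > 0` and infinitely many
positive integers `q` such that for every `η ∈ ℝ^n` there is a positive integer `k ≤ q`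
with `max_j ‖kα_j - η_j‖ ≤ δ / q^(1/n)`; in particular the Kronecker sequence
`k ↦ ({kα_1},…,{kα_n})` is well distributed with constant `C = 2δ`. -/
theorem nonsingular_implies_well_distributed
    (n : ℕ) (hn : 1 ≤ n) (α : Fin n → ℝ)
    (hns : 0 < Filter.atTop.limsup (fun t : ℝ => t ^ ((1 : ℝ) / n) * psiFun n α t)) :
    ∃ δ : ℝ, 0 < δ ∧
      (∀ Q : ℕ, ∃ q : ℕ, Q ≤ q ∧ 1 ≤ q ∧
        ∀ η : Fin n → ℝ, ∃ k : ℕ, 1 ≤ k ∧ k ≤ q ∧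
          (⨆ j, nint ((k : ℝ) * α j - η j)) ≤ δ / (q : ℝ) ^ ((1 : ℝ) / n)) ∧
      (∀ Q : ℕ, ∃ q : ℕ, Q ≤ q ∧ 1 ≤ q ∧
        ∀ η : Fin n → ℝ, (∀ j, η j ∈ Set.Ico (0 : ℝ) 1) →
          (Set.univ.pi fun j =>
              Set.Ico (η j) (η j + 2 * δ / (q : ℝ) ^ ((1 : ℝ) / n))) ⊆
            (Set.univ.pi fun _ : Fin n => Set.Ico (0 : ℝ) 1) →
          ∃ k : ℕ, 1 ≤ k ∧ k ≤ q ∧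
            ∀ j, Int.fract ((k : ℝ) * α j) ∈
              Set.Ico (η j) (η j + 2 * δ / (q : ℝ) ^ ((1 : ℝ) / n))) := by
  obtain ⟨γ, hγ, hγ1, hfreq⟩ := exists_frequently_lt_rpow_mul_psiFun hns
  set δ : ℝ := 3 * (⌈(2 / γ) ^ n⌉₊ ! : ℝ) ^ 2
  have happrox : ∀ Q : ℕ, ∃ q : ℕ, Q ≤ q ∧ 1 ≤ q ∧ ∀ η : Fin n → ℝ, ∃ k : ℕ, 1 ≤ k ∧ k ≤ q ∧
      ∀ j, nint (k * α j - η j) < δ / (q : ℝ) ^ ((1 : ℝ) / n) := by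
    intro Q
    obtain ⟨t, hQt, ht, hγt⟩ := hfreq Q
    obtain ⟨q, htq, hq⟩ := exists_forall_nint_sub_lt_of_lt_rpow_mul_psiFun hn hγ hγ1 ht hγt
    exact ⟨q, (Nat.le_floor hQt).trans htq, hq⟩
  refine ⟨δ, by positivity, fun Q => ?_, fun Q => ?_⟩
  · obtain ⟨q, hQq, hq1, hq⟩ := happrox Q
    refine ⟨q, hQq, hq1, fun η => ?_⟩
    obtain ⟨k, hk1, hkq, hk⟩ := hq η
    exact ⟨k, hk1, hkq, Real.iSup_le (fun j => (hk j).le) (by positivity)⟩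
  · obtain ⟨q, hQq, hq1, hq⟩ := happrox Q
    refine ⟨q, hQq, hq1, fun η _ hbox => ?_⟩
    set ρ := δ / (q : ℝ) ^ ((1 : ℝ) / n)
    have hρ : 0 < ρ := by positivity
    obtain ⟨k, hk1, hkq, hk⟩ := hq (fun j => η j + ρ)
    refine ⟨k, hk1, hkq, fun j => ?_⟩
    simp only [mul_div_assoc] at hbox ⊢
    obtain ⟨h0, h1⟩ := (Set.Ico_subset_Ico_iff (by linarith)).mp
      (Set.Ico_subset_Ico_of_univ_pi_Ico_subset (fun _ => by linarith) hbox j)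
    exact fract_mem_Ico_of_nint_sub_lt h0 h1 (hk j)
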